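/- The supremum norm bound $\|f\|_\infty \le \sqrt{I(f)}$ holds for any sufficiently regular probability density $f$ on $\mathbb{R}$ with finite Fisher information, where $I(f) = \int_{\mathbb{R}} \frac{(f'(x))^2}{f(x)}\,dx$. -/

import Mathlib

open Real MeasureTheory Filter

/-!
By the fundamental theorem of calculus and the decay of `f` at `-∞`, `f x = ∫_{-∞}^x f' ≤ ∫ |f'|`.
Cauchy–Schwarz against the weight `f` (with `∫ f = 1`) gives `∫ |f'| ≤ √(∫ f'^2 / f)`, which follows
from the pointwise AM-GM bound `|f'| ≤ (f'^2 / (f t) + f t) / 2`, integrated and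
optimised over `t > 0`.
-/

theorem two_mul_abs_le_sq_div_add {s : ℝ} (a : ℝ) (hs : 0 < s) : 2 * |a| ≤ a ^ 2 / s + s := by
  rw [div_add' _ _ _ hs.ne', le_div_iff₀ hs]
  nlinarith [sq_nonneg (|a| - s), sq_abs a]

theorem le_sqrt_of_forall_le_half_div_add {a c : ℝ} (hc : 0 ≤ c)
    (h : ∀ t, 0 < t → a ≤ (c / t + t) / 2) : a ≤ √c := by
  rcases hc.eq_or_lt with rfl | hc
  · rw [sqrt_zero]
    refine le_of_forall_pos_le_add fun t ht => ?_
    have := h t ht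
    rw [zero_div, zero_add] at this
    linarith
  · have := h √c (sqrt_pos.2 hc)
    rwa [div_sqrt, add_self_div_two] at this

theorem abs_le_half_sq_div_div_add_mul (a : ℝ) {b t : ℝ} (hb : 0 < b) (ht : 0 < t) :
    |a| ≤ (a ^ 2 / b / t + b * t) / 2 := by
  have := two_mul_abs_le_sq_div_add a (mul_pos hb ht)
  rw [← div_div] at this
  linarith

section WeightedL1

variable {α : Type*} [MeasurableSpace α] {μ : Measure α} {f g : α → ℝ}

theorem integrable_of_integrable_sq_div (hf_pos : ∀ x, 0 < f x) (hf : Integrable f μ)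
    (hg : AEStronglyMeasurable g μ) (hgf : Integrable (fun x => g x ^ 2 / f x) μ) :
    Integrable g μ := by
  refine (((hgf.div_const 1).add (hf.mul_const 1)).div_const 2).mono' hg
    (Eventually.of_forall fun x => ?_)
  rw [norm_eq_abs]
  exact abs_le_half_sq_div_div_add_mul (g x) (hf_pos x) one_pos

theorem integral_abs_le_sqrt_integral_sq_div (hf_pos : ∀ x, 0 < f x) (hf1 : ∫ x, f x ∂μ = 1)
    (hgf : Integrable (fun x => g x ^ 2 / f x) μ) :
    ∫ x, |g x| ∂μ ≤ √(∫ x, g x ^ 2 / f x ∂μ) := by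
  have hf : Integrable f μ := integrable_of_integral_eq_one hf1
  refine le_sqrt_of_forall_le_half_div_add
    (integral_nonneg fun x => div_nonneg (sq_nonneg _) (hf_pos x).le) fun t ht => ?_
  have hdom : Integrable (fun x => (g x ^ 2 / f x / t + f x * t) / 2) μ :=
    ((hgf.div_const t).add (hf.mul_const t)).div_const 2
  calc ∫ x, |g x| ∂μ ≤ ∫ x, (g x ^ 2 / f x / t + f x * t) / 2 ∂μ :=
        integral_mono_of_nonneg (Eventually.of_forall fun _ => abs_nonneg _) hdom
          (Eventually.of_forall fun x => abs_le_half_sq_div_div_add_mul (g x) (hf_pos x) ht)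
    _ = ((∫ x, g x ^ 2 / f x ∂μ) / t + t) / 2 := by
        rw [integral_div, integral_add (hgf.div_const t) (hf.mul_const t), integral_div,
          integral_mul_const, hf1, one_mul]

end WeightedL1

theorem le_integral_abs_of_hasDerivAt_of_tendsto_atBot {f f' : ℝ → ℝ}
    (hderiv : ∀ x, HasDerivAt f (f' x) x) (hf' : Integrable f') (hbot : Tendsto f atBot (nhds 0))
    (x : ℝ) : f x ≤ ∫ y, |f' y| := by
  calc f x = ∫ y in Set.Iic x, f' y := by
        rw [integral_Iic_of_hasDerivAt_of_tendsto' (fun y _ => hderiv y) hf'.integrableOn hbot,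
          sub_zero]
    _ ≤ ∫ y in Set.Iic x, |f' y| :=
        setIntegral_mono hf'.integrableOn hf'.abs.integrableOn fun y => le_abs_self _
    _ ≤ ∫ y, |f' y| := setIntegral_le_integral hf'.abs (Eventually.of_forall fun _ => abs_nonneg _)

theorem stmt16 (f : ℝ → ℝ) (hfpos : ∀ x, 0 < f x)
    (hf : ContDiff ℝ 1 f) (hfint : ∫ x, f x = 1)
    (hvanish : Tendsto f atTop (nhds 0) ∧ Tendsto f atBot (nhds 0))
    (hI : Integrable (fun x => (deriv f x) ^ 2 / f x)) :
    ∀ x : ℝ, f x ≤ Real.sqrt (∫ y, (deriv f y) ^ 2 / f y) := by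
  intro x
  have hderiv : ∀ y, HasDerivAt f (deriv f y) y :=
    fun y => (hf.differentiable one_ne_zero y).hasDerivAt
  have hf' : Integrable (deriv f) := integrable_of_integrable_sq_div hfpos
    (integrable_of_integral_eq_one hfint) (measurable_deriv f).aestronglyMeasurable hI
  exact (le_integral_abs_of_hasDerivAt_of_tendsto_atBot hderiv hf' hvanish.2 x).trans
    (integral_abs_le_sqrt_integral_sq_div hfpos hfint hI)
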